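/- arXiv:2506.10087 — 5 statements merged into one kernel-verified Lean document; each statement's English description precedes it below -/
import Mathlib

section
/- Let (E,d) be a complete metric space and let z : ℝ → E be right-continuous and of bounded variation. Then for every function w : ℝ → E that agrees with z Lebesgue-almost everywhere, one has Var(z) ≤ Var(w). In other words, right-continuous representatives minimize the total variation within their almost-everywhere equivalence class. -/
open MeasureTheory Set Filter
open scoped NNReal ENNReal

/-- In every interval `(x, t)` there is a point where two a.e.-equal functions agree. -/
lemma exists_agree_mem_Ioo {E : Type*} (z w : ℝ → E) (hw : z =ᵐ[volume] w)
    {x t : ℝ} (hxt : x < t) : ∃ b, z b = w b ∧ b ∈ Set.Ioo x t := by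
  by_contra h
  push_neg at h
  have hsub : Set.Ioo x t ⊆ {a | ¬ z a = w a} := by
    intro a ha
    exact fun he => h a he ha
  have h0 : volume {a | ¬ z a = w a} = 0 := hw
  have : volume (Set.Ioo x t) = 0 := measure_mono_null hsub h0
  rw [Real.volume_Ioo] at this
  exact (ENNReal.ofReal_pos.mpr (by linarith)).ne' this

/-- If `z : ℝ → E` is right-continuous and of bounded variation, then
any function `w` agreeing with `z` Lebesgue-almost everywhere has total variation at
least that of `z`: right-continuous representatives minimize the total variation in
their a.e. equivalence class. -/
theorem rightContinuous_minimizes_variation {E : Type*} [MetricSpace E] [CompleteSpace E]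
    (z : ℝ → E) (hz_rc : ∀ x : ℝ, ContinuousWithinAt z (Set.Ici x) x)
    (hz_bv : BoundedVariationOn z Set.univ)
    (w : ℝ → E) (hw : z =ᵐ[MeasureTheory.volume] w) :
    eVariationOn z Set.univ ≤ eVariationOn w Set.univ := by
  rw [eVariationOn]
  refine iSup_le ?_
  rintro ⟨n, u, hu, -⟩
  dsimp only
  refine ENNReal.le_of_forall_pos_le_add fun ε hε _ => ?_
  -- the small parameter
  set ε' : ℝ≥0 := ε / (2 * (n + 1)) with hε'def
  have hden : (2 * ((n : ℝ≥0) + 1)) ≠ 0 := by positivity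
  have hε'pos : (0 : ℝ≥0∞) < (ε' : ℝ≥0∞) := by
    have : (0 : ℝ≥0) < ε' := by
      rw [hε'def]
      positivity
    exact_mod_cast this
  -- right continuity, quantitative form
  have hrc : ∀ x : ℝ, ∃ δ > (0 : ℝ), ∀ y, x ≤ y → y < x + δ →
      edist (z y) (z x) < (ε' : ℝ≥0∞) := by
    intro x
    have h1 : Filter.Tendsto z (nhdsWithin x (Set.Ici x)) (nhds (z x)) := hz_rc x
    rw [EMetric.tendsto_nhds] at h1
    have h2 := h1 _ hε'pos
    rw [eventually_nhdsWithin_iff, Metric.eventually_nhds_iff] at h2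
    obtain ⟨δ, δpos, hδ⟩ := h2
    refine ⟨δ, δpos, fun y hxy hyδ => hδ ?_ hxy⟩
    rw [Real.dist_eq, abs_of_nonneg (by linarith)]
    linarith
  -- choice of nearby agreement points
  have main : ∀ x : ℝ, ∃ b, z b = w b ∧ x < b ∧ edist (z b) (z x) < (ε' : ℝ≥0∞) ∧
      ∀ i ≤ n, x < u i → b < u i := by
    intro x
    obtain ⟨δ, δpos, hδ⟩ := hrc x
    set F := (Finset.range (n + 1)).filter (fun i => x < u i) with hF
    rcases F.eq_empty_or_nonempty with hFe | hFne
    · obtain ⟨b, hb, hbmem⟩ := exists_agree_mem_Ioo z w hw (show x < x + δ by linarith)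
      refine ⟨b, hb, hbmem.1, hδ b hbmem.1.le hbmem.2, fun i hi hxi => ?_⟩
      exfalso
      have : i ∈ F := Finset.mem_filter.mpr ⟨Finset.mem_range.mpr (Nat.lt_succ_of_le hi), hxi⟩
      simp [hFe] at this
    · have hFne' : (F.image u).Nonempty := hFne.image u
      set m := (F.image u).min' hFne' with hm
      have hxm : x < m := by
        obtain ⟨i, hiF, hium⟩ := Finset.mem_image.mp ((F.image u).min'_mem hFne')
        rw [hm, ← hium]
        exact (Finset.mem_filter.mp hiF).2
      have hxmin : x < min m (x + δ) := lt_min hxm (by linarith)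
      obtain ⟨b, hb, hbmem⟩ := exists_agree_mem_Ioo z w hw hxmin
      have hb2 := hbmem.2
      rw [lt_min_iff] at hb2
      refine ⟨b, hb, hbmem.1, hδ b hbmem.1.le hb2.2, fun i hi hxi => ?_⟩
      have hiF : i ∈ F :=
        Finset.mem_filter.mpr ⟨Finset.mem_range.mpr (Nat.lt_succ_of_le hi), hxi⟩
      exact hb2.1.trans_le (Finset.min'_le _ _ (Finset.mem_image_of_mem u hiF))
  choose b hb1 hb2 hb3 hb4 using main
  -- the perturbed partition
  set v : ℕ → ℝ := fun i => b (u i) with hv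
  have hv_mono : MonotoneOn v (Set.Icc 0 n) := by
    intro i hi j hj hij
    rcases (hu hij).lt_or_eq with hlt | heq
    · have h1 : b (u i) < u j := hb4 (u i) j hj.2 hlt
      have h2 : u j < b (u j) := hb2 (u j)
      exact (h1.trans h2).le
    · simp only [hv, heq]
      exact le_rfl
  -- each term estimate
  have hterm : ∀ i, edist (z (u (i + 1))) (z (u i)) ≤
      edist (w (v (i + 1))) (w (v i)) + ((ε' : ℝ≥0∞) + ε') := by
    intro i
    have t4 : edist (z (u (i + 1))) (z (u i)) ≤
        edist (z (u (i + 1))) (z (v (i + 1))) + edist (z (v (i + 1))) (z (v i)) +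
          edist (z (v i)) (z (u i)) := edist_triangle4 _ _ _ _
    have e1 : edist (z (u (i + 1))) (z (v (i + 1))) ≤ (ε' : ℝ≥0∞) := by
      rw [edist_comm]
      exact (hb3 (u (i + 1))).le
    have e2 : edist (z (v i)) (z (u i)) ≤ (ε' : ℝ≥0∞) := (hb3 (u i)).le
    have e3 : edist (z (v (i + 1))) (z (v i)) = edist (w (v (i + 1))) (w (v i)) := by
      rw [hb1 (u (i + 1)), hb1 (u i)]
    calc edist (z (u (i + 1))) (z (u i))
        ≤ edist (z (u (i + 1))) (z (v (i + 1))) + edist (z (v (i + 1))) (z (v i)) +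
          edist (z (v i)) (z (u i)) := t4
      _ ≤ (ε' : ℝ≥0∞) + edist (w (v (i + 1))) (w (v i)) + ε' := by
          rw [e3] at *
          exact add_le_add (add_le_add e1 le_rfl) e2
      _ = edist (w (v (i + 1))) (w (v i)) + ((ε' : ℝ≥0∞) + ε') := by ring
  -- the perturbed sum is bounded by the variation of `w`
  have hsum : (∑ i ∈ Finset.range n, edist (w (v (i + 1))) (w (v i))) ≤
      eVariationOn w Set.univ := by
    rw [Finset.range_eq_Ico]
    exact eVariationOn.sum_le_of_monotoneOn_Icc (f := w) hv_mono (fun i _ => Set.mem_univ _)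
  -- error term bound
  have herr : (n : ℝ≥0∞) * ((ε' : ℝ≥0∞) + ε') ≤ (ε : ℝ≥0∞) := by
    have h1 : (n : ℝ≥0) * (ε' + ε') ≤ ε := by
      have : (n : ℝ≥0) * (ε' + ε') ≤ ((n : ℝ≥0) + 1) * (ε' + ε') := by
        gcongr
        exact le_self_add
      refine this.trans ?_
      rw [hε'def]
      rw [show ((n : ℝ≥0) + 1) * (ε / (2 * (n + 1)) + ε / (2 * (n + 1)))
          = (2 * ((n : ℝ≥0) + 1)) * (ε / (2 * ((n : ℝ≥0) + 1))) by ring]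
      rw [mul_div_cancel₀ _ hden]
    calc (n : ℝ≥0∞) * ((ε' : ℝ≥0∞) + ε') = (((n : ℝ≥0) * (ε' + ε') : ℝ≥0) : ℝ≥0∞) := by
          push_cast
          ring
      _ ≤ (ε : ℝ≥0∞) := by exact_mod_cast h1
  calc (∑ i ∈ Finset.range n, edist (z (u (i + 1))) (z (u i)))
      ≤ ∑ i ∈ Finset.range n, (edist (w (v (i + 1))) (w (v i)) + ((ε' : ℝ≥0∞) + ε')) :=
        Finset.sum_le_sum fun i _ => hterm i
    _ = (∑ i ∈ Finset.range n, edist (w (v (i + 1))) (w (v i)))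
        + (n : ℝ≥0∞) * ((ε' : ℝ≥0∞) + ε') := by
        rw [Finset.sum_add_distrib, Finset.sum_const, Finset.card_range, nsmul_eq_mul]
    _ ≤ eVariationOn w Set.univ + (ε : ℝ≥0∞) := add_le_add hsum herr
end

section
/- (Helly-type selection theorem for metric-space-valued BV functions.) Let (E,d) be a compact metric space, z_v ∈ E, and let z_n : ℝ → E be a sequence of functions with Var(z_n) ≤ C and sup_{x ∈ ℝ} d(z_n(x), z_v) ≤ M for all n, where C, M are fixed constants. Then there exist a subsequence z_{n_k} and a function z : ℝ → E of bounded variation such that: z_{n_k}(x) → z(x) for every x ∈ ℝ; Var(z) ≤ C; sup_{x ∈ ℝ} d(z(x), z_v) ≤ M; and moreover for every compact set K ⊂ ℝ, ∫_K d(z_{n_k}(x), z(x)) dx → 0 as k → ∞. -/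
open Set Filter MeasureTheory Topology

namespace HellyAux

variable {E : Type*} [MetricSpace E]

/-- The (real-valued) variation function of `f` up to `x`. -/
noncomputable def vFn (f : ℝ → E) (x : ℝ) : ℝ := (eVariationOn f (Set.Iic x)).toReal

lemma evar_Iic_ne_top {f : ℝ → E} (hf : eVariationOn f univ ≠ ⊤) (x : ℝ) :
    eVariationOn f (Iic x) ≠ ⊤ :=
  ne_top_of_le_ne_top hf (eVariationOn.mono f (subset_univ _))

lemma vFn_mono {f : ℝ → E} (hf : eVariationOn f univ ≠ ⊤) : Monotone (vFn f) := fun x y hxy =>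
  ENNReal.toReal_mono (evar_Iic_ne_top hf y) (eVariationOn.mono f (Iic_subset_Iic.2 hxy))

lemma evar_Iic_add {f : ℝ → E} {x y : ℝ} (hxy : x ≤ y) :
    eVariationOn f (Iic x) + edist (f x) (f y) ≤ eVariationOn f (Iic y) := by
  have hu : eVariationOn f (Iic x) + eVariationOn f (Icc x y) = eVariationOn f (Iic y) := by
    rw [← eVariationOn.union f isGreatest_Iic (isLeast_Icc hxy), Iic_union_Icc_eq_Iic hxy]
  calc eVariationOn f (Iic x) + edist (f x) (f y)
      ≤ eVariationOn f (Iic x) + eVariationOn f (Icc x y) :=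
        add_le_add le_rfl (eVariationOn.edist_le f (left_mem_Icc.2 hxy) (right_mem_Icc.2 hxy))
    _ = eVariationOn f (Iic y) := hu

lemma vFn_dist {f : ℝ → E} (hf : eVariationOn f univ ≠ ⊤) {x y : ℝ} (hxy : x ≤ y) :
    dist (f x) (f y) ≤ vFn f y - vFn f x := by
  have h := evar_Iic_add (f := f) hxy
  have hx := evar_Iic_ne_top hf x
  have hy := evar_Iic_ne_top hf y
  have := ENNReal.toReal_mono hy h
  rw [ENNReal.toReal_add hx (edist_ne_top _ _)] at this
  rw [dist_edist]
  unfold vFn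
  linarith

lemma vFn_dist' {f : ℝ → E} (hf : eVariationOn f univ ≠ ⊤) (x y : ℝ) :
    dist (f x) (f y) ≤ |vFn f y - vFn f x| := by
  rcases le_total x y with h | h
  · exact (vFn_dist hf h).trans (le_abs_self _)
  · rw [dist_comm, abs_sub_comm]
    exact (vFn_dist hf h).trans (le_abs_self _)

lemma continuousAt_of_vFn {f : ℝ → E} (hf : eVariationOn f univ ≠ ⊤) {x : ℝ}
    (h : ContinuousAt (vFn f) x) : ContinuousAt f x := by
  rw [Metric.continuousAt_iff] at h ⊢
  intro ε hε
  obtain ⟨δ, hδ, hd⟩ := h ε hε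
  refine ⟨δ, hδ, fun {y} hy => ?_⟩
  calc dist (f y) (f x) ≤ |vFn f x - vFn f y| := vFn_dist' hf y x
    _ = dist (vFn f y) (vFn f x) := by rw [Real.dist_eq, abs_sub_comm]
    _ < ε := hd hy

/-- The discontinuity set of a BV function is countable. -/
lemma countable_discont {f : ℝ → E} (hf : eVariationOn f univ ≠ ⊤) :
    Set.Countable {x : ℝ | ¬ ContinuousAt f x} := by
  apply ((vFn_mono hf).countable_not_continuousAt).mono
  intro x hx
  simp only [mem_setOf_eq] at hx ⊢
  exact fun h => hx (continuousAt_of_vFn hf h)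

/-- BV functions are a.e. measurable enough: `edist (f x) (g x)` is a.e. measurable. -/
lemma aemeasurable_edist {f g : ℝ → E} (hf : eVariationOn f univ ≠ ⊤)
    (hg : eVariationOn g univ ≠ ⊤) (K : Set ℝ) :
    AEMeasurable (fun x => edist (f x) (g x)) (volume.restrict K) := by
  set D := {x : ℝ | ¬ ContinuousAt f x} ∪ {x : ℝ | ¬ ContinuousAt g x} with hD
  have hDc : D.Countable := (countable_discont hf).union (countable_discont hg)
  have hDm : MeasurableSet D := hDc.measurableSet
  have hcont : ContinuousOn (fun x => edist (f x) (g x)) Dᶜ := by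
    intro x hx
    simp only [mem_compl_iff, hD, mem_union, not_or, mem_setOf_eq, not_not] at hx
    exact ContinuousWithinAt.mono (ContinuousAt.continuousWithinAt (Filter.Tendsto.edist hx.1 hx.2)) (subset_univ _)
  have h1 : AEMeasurable (fun x => edist (f x) (g x)) (volume.restrict Dᶜ) :=
    hcont.aemeasurable hDm.compl
  have h2 : (volume.restrict K) = (volume.restrict (K ∩ Dᶜ)) := by
    refine (Measure.restrict_congr_set ?_).symm
    have : (volume : Measure ℝ) D = 0 := hDc.measure_zero _
    rw [Set.inter_comm]
    exact MeasureTheory.inter_ae_eq_right_of_ae_eq_univ (by rwa [ae_eq_univ, compl_compl])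
  rw [h2]
  exact h1.mono_measure (Measure.restrict_mono inter_subset_right le_rfl)


end HellyAux

section Main

open HellyAux

/-- Helly-type selection theorem for metric-space-valued BV functions.
Let `E` be a compact metric space, `z_v ∈ E`, and `z_n : ℝ → E` a sequence with
`Var(z_n) ≤ C` and `sup_x d(z_n(x), z_v) ≤ M`. Then some subsequence `z_{n_k}` converges
pointwise to a BV function `z` with `Var(z) ≤ C`, `sup_x d(z(x), z_v) ≤ M`, and
`∫_K d(z_{n_k}, z) → 0` on every compact `K ⊆ ℝ`. -/
theorem helly_selection_metric {E : Type*} [MetricSpace E] [CompactSpace E]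
    (z_v : E) (C M : ℝ) (z : ℕ → ℝ → E)
    (hVar : ∀ n, eVariationOn (z n) Set.univ ≤ ENNReal.ofReal C)
    (hBdd : ∀ n x, dist (z n x) z_v ≤ M) :
    ∃ φ : ℕ → ℕ, StrictMono φ ∧ ∃ zl : ℝ → E,
      (∀ x : ℝ, Filter.Tendsto (fun k => z (φ k) x) Filter.atTop (nhds (zl x))) ∧
      BoundedVariationOn zl Set.univ ∧
      eVariationOn zl Set.univ ≤ ENNReal.ofReal C ∧
      (∀ x : ℝ, dist (zl x) z_v ≤ M) ∧
      ∀ K : Set ℝ, IsCompact K →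
        Filter.Tendsto (fun k => ∫⁻ x in K, edist (z (φ k) x) (zl x))
          Filter.atTop (nhds 0) := by
  have hne : ∀ n, eVariationOn (z n) Set.univ ≠ ⊤ :=
    fun n => ne_top_of_le_ne_top ENNReal.ofReal_ne_top (hVar n)
  -- First extraction: convergence on rationals of both the function values
  -- and the cumulative variations.
  set F : ℕ → (ℚ → E) × (ℚ → ENNReal) :=
    fun n => (fun q => z n (q : ℝ), fun q => eVariationOn (z n) (Iic (q : ℝ))) with hF
  obtain ⟨gw, φ₀, hφ₀, hlim⟩ := CompactSpace.tendsto_subseq F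
  have hg : ∀ q : ℚ, Tendsto (fun k => z (φ₀ k) (q : ℝ)) atTop (𝓝 (gw.1 q)) := by
    intro q
    have h1 : Tendsto (fun k => (F (φ₀ k)).1) atTop (𝓝 gw.1) :=
      ((continuous_fst.tendsto gw).comp hlim)
    exact tendsto_pi_nhds.mp h1 q
  have hw : ∀ q : ℚ, Tendsto (fun k => eVariationOn (z (φ₀ k)) (Iic (q : ℝ)))
      atTop (𝓝 (gw.2 q)) := by
    intro q
    have h2 : Tendsto (fun k => (F (φ₀ k)).2) atTop (𝓝 gw.2) :=
      ((continuous_snd.tendsto gw).comp hlim)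
    exact tendsto_pi_nhds.mp h2 q
  have hwC : ∀ q : ℚ, gw.2 q ≤ ENNReal.ofReal C := by
    intro q
    refine le_of_tendsto (hw q) (Eventually.of_forall fun k => ?_)
    exact (eVariationOn.mono _ (subset_univ _)).trans (hVar _)
  have hwne : ∀ q : ℚ, gw.2 q ≠ ⊤ :=
    fun q => ne_top_of_le_ne_top ENNReal.ofReal_ne_top (hwC q)
  set v : ℚ → ℝ := fun q => (gw.2 q).toReal with hv
  have hvlim : ∀ q : ℚ, Tendsto (fun k => vFn (z (φ₀ k)) (q : ℝ)) atTop (𝓝 (v q)) :=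
    fun q => (ENNReal.tendsto_toReal (hwne q)).comp (hw q)
  have hvmono : ∀ p q : ℚ, p ≤ q → v p ≤ v q := by
    intro p q hpq
    refine le_of_tendsto_of_tendsto' (hvlim p) (hvlim q) fun k => ?_
    exact ENNReal.toReal_mono
      (ne_top_of_le_ne_top (hne _) (eVariationOn.mono _ (subset_univ _)))
      (eVariationOn.mono _ (Iic_subset_Iic.2 (by exact_mod_cast hpq)))
  have hvC : ∀ q : ℚ, v q ≤ (ENNReal.ofReal C).toReal := by
    intro q
    exact ENNReal.toReal_mono ENNReal.ofReal_ne_top (hwC q)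
  -- The monotone envelope `h` on the reals, and its (countable) discontinuity set `J`.
  set h : ℝ → ℝ := fun x => sSup (v '' {q : ℚ | (q : ℝ) < x}) with hh
  have hbdd : ∀ x : ℝ, BddAbove (v '' {q : ℚ | (q : ℝ) < x}) := by
    intro x
    refine ⟨(ENNReal.ofReal C).toReal, ?_⟩
    rintro a ⟨q, -, rfl⟩
    exact hvC q
  have hnon : ∀ x : ℝ, (v '' {q : ℚ | (q : ℝ) < x}).Nonempty := by
    intro x
    obtain ⟨q, hq⟩ := exists_rat_lt x
    exact ⟨v q, ⟨q, hq, rfl⟩⟩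
  have hmono : Monotone h := by
    intro x y hxy
    exact csSup_le_csSup (hbdd y) (hnon x) (image_mono fun q hq => lt_of_lt_of_le hq hxy)
  have hle1 : ∀ p : ℚ, h (p : ℝ) ≤ v p := by
    intro p
    refine csSup_le (hnon _) ?_
    rintro a ⟨q, hq, rfl⟩
    exact hvmono q p (le_of_lt (by exact_mod_cast (show (q:ℝ) < (p:ℝ) from hq)))
  have hle2 : ∀ (p : ℚ) (x : ℝ), (p : ℝ) < x → v p ≤ h x :=
    fun p x hpx => le_csSup (hbdd x) ⟨p, hpx, rfl⟩
  set J : Set ℝ := {x : ℝ | ¬ ContinuousAt h x} with hJ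
  have hJc : J.Countable := hmono.countable_not_continuousAt
  -- gap lemma at continuity points of `h`
  have hgap : ∀ x ∉ J, ∀ ε : ℝ, 0 < ε →
      ∃ p q : ℚ, (p : ℝ) < x ∧ x < (q : ℝ) ∧ v q - v p < ε := by
    intro x hx ε hε
    have hcx : ContinuousAt h x := not_not.mp hx
    rw [Metric.continuousAt_iff] at hcx
    obtain ⟨δ, hδ, hd⟩ := hcx (ε / 3) (by linarith)
    obtain ⟨p, hp1, hp2⟩ := exists_rat_btwn (show x - δ < x by linarith)
    obtain ⟨q, hq1, hq2⟩ := exists_rat_btwn (show x < x + δ / 2 by linarith)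
    refine ⟨p, q, hp2, hq1, ?_⟩
    have h1 : v p ≥ h x - ε / 3 := by
      have hpd : dist ((p : ℝ)) x < δ := by
        rw [Real.dist_eq, abs_sub_lt_iff]; constructor <;> linarith
      have hdp := hd hpd
      rw [Real.dist_eq, abs_sub_lt_iff] at hdp
      have := hle1 p
      linarith [hdp.2]
    have h2 : v q ≤ h x + ε / 3 := by
      have hylt : (q : ℝ) < x + 3 * δ / 4 := by linarith
      have hyd : dist (x + 3 * δ / 4) x < δ := by
        rw [Real.dist_eq, abs_sub_lt_iff]; constructor <;> linarith
      have hdy := hd hyd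
      rw [Real.dist_eq, abs_sub_lt_iff] at hdy
      have := hle2 q _ hylt
      linarith [hdy.1]
    linarith
  -- Second extraction: convergence on the countable set `J`.
  haveI : Countable ↥J := hJc.to_subtype
  obtain ⟨gJ, φ₁, hφ₁, hlimJ⟩ :=
    CompactSpace.tendsto_subseq (fun k => (fun j : ↥J => z (φ₀ k) (j : ℝ)))
  set φ : ℕ → ℕ := φ₀ ∘ φ₁ with hφdef
  have hφmono : StrictMono φ := hφ₀.comp hφ₁
  -- convergence facts along φ
  have hgφ : ∀ q : ℚ, Tendsto (fun k => z (φ k) (q : ℝ)) atTop (𝓝 (gw.1 q)) :=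
    fun q => (hg q).comp hφ₁.tendsto_atTop
  have hvφ : ∀ q : ℚ, Tendsto (fun k => vFn (z (φ k)) (q : ℝ)) atTop (𝓝 (v q)) :=
    fun q => (hvlim q).comp hφ₁.tendsto_atTop
  have hJφ : ∀ j : ↥J, Tendsto (fun k => z (φ k) (j : ℝ)) atTop (𝓝 (gJ j)) :=
    fun j => tendsto_pi_nhds.mp hlimJ j
  -- pointwise convergence everywhere
  have key : ∀ x : ℝ, ∃ L : E, Tendsto (fun k => z (φ k) x) atTop (𝓝 L) := by
    intro x
    by_cases hx : x ∈ J
    · exact ⟨gJ ⟨x, hx⟩, hJφ ⟨x, hx⟩⟩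
    · -- Cauchy argument
      have hcauchy : CauchySeq (fun k => z (φ k) x) := by
        rw [Metric.cauchySeq_iff]
        intro ε hε
        obtain ⟨p, q, hpx, hxq, hgap'⟩ := hgap x hx (ε / 5) (by linarith)
        -- eventually the variation increments are small
        have hdiff : Tendsto (fun k => vFn (z (φ k)) (q : ℝ) - vFn (z (φ k)) (p : ℝ))
            atTop (𝓝 (v q - v p)) := (hvφ q).sub (hvφ p)
        have hev : ∀ᶠ k in atTop,
            vFn (z (φ k)) (q : ℝ) - vFn (z (φ k)) (p : ℝ) < ε / 4 := by
          refine hdiff.eventually_lt_const ?_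
          linarith
        obtain ⟨N₁, hN₁⟩ := eventually_atTop.mp hev
        have hcp : CauchySeq (fun k => z (φ k) (p : ℝ)) := (hgφ p).cauchySeq
        rw [Metric.cauchySeq_iff] at hcp
        obtain ⟨N₂, hN₂⟩ := hcp (ε / 4) (by linarith)
        refine ⟨max N₁ N₂, fun m hm n hn => ?_⟩
        have hxd : ∀ k, N₁ ≤ k → dist (z (φ k) x) (z (φ k) (p : ℝ)) < ε / 4 := by
          intro k hk
          have h1 : dist (z (φ k) (p : ℝ)) (z (φ k) x)
              ≤ vFn (z (φ k)) x - vFn (z (φ k)) (p : ℝ) :=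
            HellyAux.vFn_dist (hne _) (le_of_lt hpx)
          have h2 : vFn (z (φ k)) x ≤ vFn (z (φ k)) (q : ℝ) :=
            HellyAux.vFn_mono (hne _) (le_of_lt hxq)
          rw [dist_comm]
          calc dist (z (φ k) (p : ℝ)) (z (φ k) x)
              ≤ vFn (z (φ k)) (q : ℝ) - vFn (z (φ k)) (p : ℝ) := by linarith
            _ < ε / 4 := hN₁ k hk
        calc dist (z (φ m) x) (z (φ n) x)
            ≤ dist (z (φ m) x) (z (φ m) (p : ℝ)) + dist (z (φ m) (p : ℝ)) (z (φ n) (p : ℝ))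
              + dist (z (φ n) (p : ℝ)) (z (φ n) x) := dist_triangle4 _ _ _ _
          _ < ε / 4 + ε / 4 + ε / 4 := by
              gcongr
              · exact hxd m (le_trans (le_max_left _ _) hm)
              · exact hN₂ m (le_trans (le_max_right _ _) hm) n (le_trans (le_max_right _ _) hn)
              · rw [dist_comm]; exact hxd n (le_trans (le_max_left _ _) hn)
          _ < ε := by linarith
      exact cauchySeq_tendsto_of_complete hcauchy
  choose zl hzl using key
  have hzlC : eVariationOn zl univ ≤ ENNReal.ofReal C := by
    by_contra hc
    rw [not_le] at hc
    have := eVariationOn.lowerSemicontinuous_aux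
      (F := fun k => z (φ k)) (p := atTop) (f := zl) (s := univ)
      (fun x _ => hzl x) hc
    obtain ⟨k, hk⟩ := this.exists
    exact absurd (hVar (φ k)) (not_le.mpr hk)
  have hVzl : eVariationOn zl univ ≠ ⊤ :=
    ne_top_of_le_ne_top ENNReal.ofReal_ne_top hzlC
  have hdistM : ∀ x : ℝ, dist (zl x) z_v ≤ M := fun x =>
    le_of_tendsto ((hzl x).dist tendsto_const_nhds)
      (Eventually.of_forall fun k => hBdd _ x)
  refine ⟨φ, hφmono, zl, hzl, hVzl, hzlC, hdistM, ?_⟩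
  · intro K hK
    have := MeasureTheory.tendsto_lintegral_of_dominated_convergence'
      (μ := volume.restrict K)
      (F := fun k x => edist (z (φ k) x) (zl x)) (f := fun _ => 0)
      (fun _ => ENNReal.ofReal (M + M))
      (fun k => HellyAux.aemeasurable_edist (hne _) hVzl K)
      (fun k => Eventually.of_forall fun x => ?_)
      ?_
      (Eventually.of_forall fun x => ?_)
    · simpa using this
    · show edist (z (φ k) x) (zl x) ≤ ENNReal.ofReal (M + M)
      rw [edist_dist]
      refine ENNReal.ofReal_le_ofReal ?_
      calc dist (z (φ k) x) (zl x) ≤ dist (z (φ k) x) z_v + dist z_v (zl x) := dist_triangle _ _ _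
        _ ≤ M + M := add_le_add (hBdd _ x) (by rw [dist_comm]; exact hdistM x)
    · rw [MeasureTheory.lintegral_const, Measure.restrict_apply_univ]
      exact ENNReal.mul_ne_top ENNReal.ofReal_ne_top hK.measure_lt_top.ne
    · have hd : Tendsto (fun k => dist (z (φ k) x) (zl x)) atTop (𝓝 0) :=
        tendsto_iff_dist_tendsto_zero.mp (hzl x)
      have := ENNReal.tendsto_ofReal hd
      simp only [ENNReal.ofReal_zero] at this
      simpa only [edist_dist] using this

end Main
end

section
/- Let k ≥ 1 and let u_r < u_l, m_k < m_{k−1} < ... < m_1 ≤ u_r, and M_0 := u_r < M_1 < ... < M_{k−1} < u_l ≤ M_k be real numbers, and let u : ℝ × (0,∞) → ℝ be the rarefaction-fan function defined by: u(x,t) = u_l for x/t < 1/(1+2(u_l − m_k)); for each i = 1,...,k, u(x,t) = (t/x − 1)/2 + m_i for 1/(1+2(U_i − m_i)) < x/t < 1/(1+2(M_{i−1} − m_i)), where U_i := M_i for i < k and U_k := u_l; for each i = 1,...,k−1, u(x,t) = M_i for 1/(1+2(M_i − m_{i+1})) < x/t < 1/(1+2(M_i − m_i)); and u(x,t) = u_r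 for x/t > 1/(1+2(u_r − m_1)). Then for every fixed t > 0 the function x ↦ u(x,t) is nonincreasing, takes values in [u_r, u_l], tends to u_l as x → −∞ and to u_r as x → +∞, and its total variation over ℝ equals u_l − u_r, which is the total variation of the initial datum u_0 = u_l·1_{x<0} + u_r·1_{x>0}. -/
/-- Telescoping sums: if each term of `g` is a difference of consecutive values of `G`,
the sum over `range k` telescopes. -/
lemma fan_telescope (k : ℕ) (g G : ℕ → ℝ) (hg : ∀ i < k, g i = G (i + 1) - G i) :
    ∑ i ∈ Finset.range k, g i = G k - G 0 :=
  (Finset.sum_congr rfl fun i hi => hg i (Finset.mem_range.mp hi)).trans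
    (Finset.sum_range_sub G k)

/-- The total variation over `ℝ` of a nonincreasing function with values in `[d, c]`
attaining both `c` and `d` equals `c - d`. -/
lemma fan_evar_antitone {f : ℝ → ℝ} {c d a b : ℝ}
    (hf : ∀ x y : ℝ, x ≤ y → f y ≤ f x)
    (hbd : ∀ x, d ≤ f x ∧ f x ≤ c)
    (ha : f a = c) (hb : f b = d) :
    eVariationOn f Set.univ = ENNReal.ofReal (c - d) := by
  apply le_antisymm
  · apply iSup_le
    rintro ⟨n, ⟨v, hv, -⟩⟩
    have key : ∀ i : ℕ, edist (f (v (i + 1))) (f (v i))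
        = ENNReal.ofReal (f (v i) - f (v (i + 1))) := by
      intro i
      rw [edist_dist, Real.dist_eq, abs_of_nonpos (by
        have := hf (v i) (v (i + 1)) (hv (Nat.le_succ i)); linarith), neg_sub]
    calc (∑ i ∈ Finset.range n, edist (f (v (i + 1))) (f (v i)))
        = ∑ i ∈ Finset.range n, ENNReal.ofReal (f (v i) - f (v (i + 1))) :=
          Finset.sum_congr rfl fun i _ => key i
      _ = ENNReal.ofReal (∑ i ∈ Finset.range n, (f (v i) - f (v (i + 1)))) := by
          rw [ENNReal.ofReal_sum_of_nonneg]
          intro i _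
          have := hf (v i) (v (i + 1)) (hv (Nat.le_succ i)); linarith
      _ = ENNReal.ofReal (f (v 0) - f (v n)) := by rw [Finset.sum_range_sub']
      _ ≤ ENNReal.ofReal (c - d) := by
          apply ENNReal.ofReal_le_ofReal
          have h1 := (hbd (v 0)).2
          have h2 := (hbd (v n)).1
          linarith
  · have hdc : d ≤ c := ha ▸ (hbd a).1
    have : ENNReal.ofReal (c - d) = edist (f b) (f a) := by
      rw [edist_dist, Real.dist_eq, hb, ha, abs_of_nonpos (by linarith), neg_sub]
    rw [this]
    exact eVariationOn.edist_le f (Set.mem_univ b) (Set.mem_univ a)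

/-- For every fixed `t > 0`, the rarefaction-fan solution `x ↦ u(x,t)` of
the Riemann problem is nonincreasing, takes values in `[u_r, u_l]`, tends to `u_l` as
`x → -∞` and to `u_r` as `x → +∞`, and its total variation over `ℝ` equals `u_l - u_r`,
which is exactly the total variation of the initial datum
`u_0 = u_l·1_{x<0} + u_r·1_{x>0}`.  (The fan is described on the closures of the
self-similar regions; the two formulas agree on common boundary rays.) -/
theorem riemann_rarefaction_conserves_variation
    (k : ℕ) (hk : 1 ≤ k) (u_r u_l : ℝ) (m M : ℕ → ℝ)
    (hrl : u_r < u_l)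
    (hm : ∀ i, 1 ≤ i → i < k → m (i + 1) < m i)
    (hm1 : m 1 ≤ u_r)
    (hM0 : M 0 = u_r)
    (hM : ∀ i, i < k → M i < M (i + 1))
    (hMk1 : M (k - 1) < u_l) (hMk : u_l ≤ M k)
    (u : ℝ → ℝ → ℝ)
    (hu1 : ∀ x t : ℝ, 0 < t → x / t ≤ 1 / (1 + 2 * (u_l - m k)) → u x t = u_l)
    (hu2 : ∀ i, 1 ≤ i → i ≤ k → ∀ x t : ℝ, 0 < t →
      1 / (1 + 2 * ((if i < k then M i else u_l) - m i)) < x / t →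
      x / t ≤ 1 / (1 + 2 * (M (i - 1) - m i)) →
      u x t = (t / x - 1) / 2 + m i)
    (hu3 : ∀ i, 1 ≤ i → i ≤ k - 1 → ∀ x t : ℝ, 0 < t →
      1 / (1 + 2 * (M i - m (i + 1))) < x / t →
      x / t ≤ 1 / (1 + 2 * (M i - m i)) →
      u x t = M i)
    (hu4 : ∀ x t : ℝ, 0 < t → 1 / (1 + 2 * (u_r - m 1)) < x / t → u x t = u_r)
    (t : ℝ) (ht : 0 < t) :
    Antitone (fun x : ℝ => u x t) ∧
    (∀ x : ℝ, u x t ∈ Set.Icc u_r u_l) ∧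
    Filter.Tendsto (fun x : ℝ => u x t) Filter.atBot (nhds u_l) ∧
    Filter.Tendsto (fun x : ℝ => u x t) Filter.atTop (nhds u_r) ∧
    eVariationOn (fun x : ℝ => u x t) Set.univ = ENNReal.ofReal (u_l - u_r) ∧
    eVariationOn (fun x : ℝ => if x < 0 then u_l else u_r) Set.univ =
      ENNReal.ofReal (u_l - u_r) := by
  classical
  -- abstract auxiliary functions
  obtain ⟨U, hU⟩ : ∃ U : ℕ → ℝ, ∀ i, U i = if i < k then M i else u_l := ⟨_, fun _ => rfl⟩
  obtain ⟨L, hL⟩ : ∃ L : ℕ → ℝ, ∀ i, L i = 1 / (1 + 2 * (U i - m i)) := ⟨_, fun _ => rfl⟩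
  obtain ⟨R, hR⟩ : ∃ R : ℕ → ℝ, ∀ i, R i = 1 / (1 + 2 * (M (i - 1) - m i)) :=
    ⟨_, fun _ => rfl⟩
  obtain ⟨w, hw⟩ : ∃ w : ℕ → ℝ → ℝ, ∀ i s, w i s = (1 / s - 1) / 2 + m i :=
    ⟨_, fun _ _ => rfl⟩
  obtain ⟨h, hh⟩ : ∃ h : ℕ → ℝ → ℝ, ∀ i s,
      h i s = if s ≤ L i then U i else max (M (i - 1)) (w i s) := ⟨_, fun _ _ => rfl⟩
  obtain ⟨V, hV⟩ : ∃ V : ℝ → ℝ, ∀ s,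
      V s = u_r + ∑ i ∈ Finset.range k, (h (i + 1) s - M i) := ⟨_, fun _ => rfl⟩
  -- monotonicity of M and m
  have Mmono : ∀ i j : ℕ, i ≤ j → j ≤ k → M i ≤ M j := by
    intro i j hij
    induction j, hij using Nat.le_induction with
    | base => intro _; exact le_rfl
    | succ j hij ih => intro hjk; exact le_trans (ih (by omega)) (le_of_lt (hM j (by omega)))
  have mmono : ∀ i j : ℕ, 1 ≤ i → i ≤ j → j ≤ k → m j ≤ m i := by
    intro i j h1 hij
    induction j, hij using Nat.le_induction with
    | base => intro _; exact le_rfl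
    | succ j hij ih =>
        intro hjk
        exact le_trans (le_of_lt (hm j (by omega) (by omega))) (ih (by omega))
  have hm_le : ∀ i, 1 ≤ i → i ≤ k → m i ≤ u_r := fun i h1 h2 =>
    le_trans (mmono 1 i le_rfl h1 h2) hm1
  have hMge : ∀ i, i ≤ k → u_r ≤ M i := fun i hik => hM0 ▸ Mmono 0 i (Nat.zero_le i) hik
  have hUgt : ∀ i, 1 ≤ i → i ≤ k → M (i - 1) < U i := by
    intro i h1 h2
    rw [hU]
    by_cases hik : i < k
    · rw [if_pos hik]
      have := hM (i - 1) (by omega)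
      rwa [Nat.sub_add_cancel h1] at this
    · rw [if_neg hik]
      have hik' : i = k := by omega
      rw [hik']; exact hMk1
  have hUle : ∀ i, 1 ≤ i → i ≤ k → U i ≤ u_l := by
    intro i h1 h2
    rw [hU]
    by_cases hik : i < k
    · rw [if_pos hik]
      exact le_trans (Mmono i (k - 1) (by omega) (by omega)) (le_of_lt hMk1)
    · rw [if_neg hik]
  have hmMle : ∀ i, 1 ≤ i → i ≤ k → m i ≤ M (i - 1) := fun i h1 h2 =>
    le_trans (hm_le i h1 h2) (hMge (i - 1) (by omega))
  have hdR : ∀ i, 1 ≤ i → i ≤ k → (0 : ℝ) < 1 + 2 * (M (i - 1) - m i) := by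
    intro i h1 h2; have := hmMle i h1 h2; linarith
  have hdL : ∀ i, 1 ≤ i → i ≤ k → (0 : ℝ) < 1 + 2 * (U i - m i) := by
    intro i h1 h2; have := hdR i h1 h2; have := hUgt i h1 h2; linarith
  have hLpos : ∀ i, 1 ≤ i → i ≤ k → 0 < L i := by
    intro i h1 h2; rw [hL]; exact one_div_pos.mpr (hdL i h1 h2)
  have hLR : ∀ i, 1 ≤ i → i ≤ k → L i < R i := by
    intro i h1 h2
    rw [hL, hR]
    exact one_div_lt_one_div_of_lt (hdR i h1 h2) (by have := hUgt i h1 h2; linarith)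
  have hRL : ∀ i, 1 ≤ i → i + 1 ≤ k → R (i + 1) < L i := by
    intro i h1 h2
    have hUi : U i = M i := by rw [hU, if_pos (by omega)]
    rw [hL, hR, hUi, Nat.add_sub_cancel]
    apply one_div_lt_one_div_of_lt
    · have := hdL i h1 (by omega); rwa [hUi] at this
    · have := hm i h1 (by omega); linarith
  have Lanti : ∀ i j : ℕ, 1 ≤ i → i ≤ j → j ≤ k → L j ≤ L i := by
    intro i j h1 hij
    induction j, hij using Nat.le_induction with
    | base => intro _; exact le_rfl
    | succ j hij ih =>
        intro hjk
        have h1j : 1 ≤ j := le_trans h1 hij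
        exact le_trans
          (le_of_lt (lt_trans (hLR (j + 1) (by omega) hjk) (hRL j h1j hjk)))
          (ih (by omega))
  have Ranti : ∀ i j : ℕ, 1 ≤ i → i ≤ j → j ≤ k → R j ≤ R i := by
    intro i j h1 hij
    induction j, hij using Nat.le_induction with
    | base => intro _; exact le_rfl
    | succ j hij ih =>
        intro hjk
        have h1j : 1 ≤ j := le_trans h1 hij
        exact le_trans
          (le_of_lt (lt_trans (hRL j h1j hjk) (hLR j h1j (by omega))))
          (ih (by omega))
  have hRLlt : ∀ i j : ℕ, 1 ≤ i → i < j → j ≤ k → R j < L i := fun i j h1 hij hjk =>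
    lt_of_le_of_lt (Ranti (i + 1) j (by omega) hij hjk) (hRL i h1 (by omega))
  -- facts about w
  have wltU : ∀ i, 1 ≤ i → i ≤ k → ∀ s, L i < s → w i s < U i := by
    intro i h1 h2 s hs
    have h1s : 1 / s < 1 + 2 * (U i - m i) := by
      have := one_div_lt_one_div_of_lt (hLpos i h1 h2) hs
      rwa [hL, one_div_one_div] at this
    rw [hw]; linarith
  have wleM : ∀ i, 1 ≤ i → i ≤ k → ∀ s, R i ≤ s → w i s ≤ M (i - 1) := by
    intro i h1 h2 s hs
    have hRp : 0 < R i := lt_trans (hLpos i h1 h2) (hLR i h1 h2)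
    have h1s : 1 / s ≤ 1 + 2 * (M (i - 1) - m i) := by
      have := one_div_le_one_div_of_le hRp hs
      rwa [hR, one_div_one_div] at this
    rw [hw]; linarith
  have wgeM : ∀ i, 1 ≤ i → i ≤ k → ∀ s, 0 < s → s ≤ R i → M (i - 1) ≤ w i s := by
    intro i h1 h2 s hs0 hs
    have h1s : 1 + 2 * (M (i - 1) - m i) ≤ 1 / s := by
      have := one_div_le_one_div_of_le hs0 hs
      rwa [hR, one_div_one_div] at this
    rw [hw]; linarith
  -- facts about h
  have hfU : ∀ i s, s ≤ L i → h i s = U i := fun i s hs => by rw [hh, if_pos hs]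
  have hfM : ∀ i, 1 ≤ i → i ≤ k → ∀ s, R i ≤ s → h i s = M (i - 1) := by
    intro i h1 h2 s hs
    rw [hh, if_neg (not_le.mpr (lt_of_lt_of_le (hLR i h1 h2) hs))]
    exact max_eq_left (wleM i h1 h2 s hs)
  have hfw : ∀ i, 1 ≤ i → i ≤ k → ∀ s, L i < s → s ≤ R i → h i s = w i s := by
    intro i h1 h2 s hs1 hs2
    rw [hh, if_neg (not_le.mpr hs1)]
    exact max_eq_right (wgeM i h1 h2 s (lt_trans (hLpos i h1 h2) hs1) hs2)
  have hfge : ∀ i, 1 ≤ i → i ≤ k → ∀ s, M (i - 1) ≤ h i s := by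
    intro i h1 h2 s
    rw [hh]
    by_cases hsi : s ≤ L i
    · rw [if_pos hsi]; exact le_of_lt (hUgt i h1 h2)
    · rw [if_neg hsi]; exact le_max_left _ _
  have hfle : ∀ i, 1 ≤ i → i ≤ k → ∀ s, h i s ≤ U i := by
    intro i h1 h2 s
    rw [hh]
    by_cases hsi : s ≤ L i
    · rw [if_pos hsi]
    · rw [if_neg hsi]
      exact max_le (le_of_lt (hUgt i h1 h2)) (le_of_lt (wltU i h1 h2 s (not_le.mp hsi)))
  have hfanti : ∀ i, 1 ≤ i → i ≤ k → ∀ s1 s2 : ℝ, s1 ≤ s2 → h i s2 ≤ h i s1 := by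
    intro i h1 h2 s1 s2 hs
    by_cases hs2 : s2 ≤ L i
    · rw [hfU i s1 (le_trans hs hs2), hfU i s2 hs2]
    · rw [hh i s2, if_neg hs2]
      by_cases hs1 : s1 ≤ L i
      · rw [hfU i s1 hs1]
        exact max_le (le_of_lt (hUgt i h1 h2))
          (le_of_lt (wltU i h1 h2 s2 (not_le.mp hs2)))
      · rw [hh i s1, if_neg hs1]
        have hp1 : 0 < s1 := lt_trans (hLpos i h1 h2) (not_le.mp hs1)
        have hw12 : w i s2 ≤ w i s1 := by
          have := one_div_le_one_div_of_le hp1 hs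
          rw [hw, hw]; linarith
        exact max_le_max le_rfl hw12
  -- V facts
  have Vanti : ∀ s1 s2 : ℝ, s1 ≤ s2 → V s2 ≤ V s1 := by
    intro s1 s2 hs
    rw [hV, hV]
    have hterm : ∀ i ∈ Finset.range k, h (i + 1) s2 - M i ≤ h (i + 1) s1 - M i := by
      intro i hi
      have hik := Finset.mem_range.mp hi
      have := hfanti (i + 1) (by omega) (by omega) s1 s2 hs
      linarith
    have := Finset.sum_le_sum hterm
    linarith
  have Vlb : ∀ s, u_r ≤ V s := by
    intro s
    rw [hV]
    have hterm : ∀ i ∈ Finset.range k, (0 : ℝ) ≤ h (i + 1) s - M i := by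
      intro i hi
      have hik := Finset.mem_range.mp hi
      have := hfge (i + 1) (by omega) (by omega) s
      rw [Nat.add_sub_cancel] at this
      linarith
    have := Finset.sum_nonneg hterm
    linarith
  have Vub : ∀ s, V s ≤ u_l := by
    intro s
    rw [hV]
    have hterm : ∀ i ∈ Finset.range k, h (i + 1) s - M i ≤
        (if i + 1 < k then M (i + 1) else u_l) - (if i < k then M i else u_l) := by
      intro i hi
      have hik := Finset.mem_range.mp hi
      have h1 := hfle (i + 1) (by omega) (by omega) s
      rw [hU] at h1
      rw [if_pos hik]
      linarith
    have hsum := Finset.sum_le_sum hterm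
    have htel : ∑ i ∈ Finset.range k,
        ((if i + 1 < k then M (i + 1) else u_l) - (if i < k then M i else u_l)) =
        (if k < k then M k else u_l) - (if 0 < k then M 0 else u_l) :=
      fan_telescope k _ (fun i => if i < k then M i else u_l) (fun i _ => rfl)
    rw [htel, if_neg (lt_irrefl k), if_pos (show 0 < k by omega), hM0] at hsum
    linarith
  -- main correspondence
  have main : ∀ x : ℝ, u x t = V (x / t) := by
    intro x
    set s := x / t with hsx
    rcases le_or_gt s (L k) with hcase | hcase1
    · -- left constant state
      have hval : u x t = u_l := by
        apply hu1 x t ht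
        have hLk : L k = 1 / (1 + 2 * (u_l - m k)) := by
          rw [hL, hU, if_neg (lt_irrefl k)]
        rw [← hsx, ← hLk]; exact hcase
      rw [hval, hV]
      have hterm : ∀ i < k, h (i + 1) s - M i =
          (if i + 1 < k then M (i + 1) else u_l) - (if i < k then M i else u_l) := by
        intro i hik
        have hsL : s ≤ L (i + 1) := le_trans hcase (Lanti (i + 1) k (by omega) (by omega) le_rfl)
        rw [hfU (i + 1) s hsL, hU, if_pos hik]
      have htel : ∑ i ∈ Finset.range k, (h (i + 1) s - M i) =
          (if k < k then M k else u_l) - (if 0 < k then M 0 else u_l) :=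
        fan_telescope k _ (fun i => if i < k then M i else u_l) hterm
      rw [htel, if_neg (lt_irrefl k), if_pos (show 0 < k by omega), hM0]
      ring
    rcases lt_or_ge (R 1) s with hcase4 | hcase41
    · -- right constant state
      have hval : u x t = u_r := by
        apply hu4 x t ht
        have hR1 : R 1 = 1 / (1 + 2 * (u_r - m 1)) := by
          rw [hR]; norm_num [hM0]
        rw [← hsx, ← hR1]; exact hcase4
      rw [hval, hV]
      have hterm : ∀ i ∈ Finset.range k, h (i + 1) s - M i = 0 := by
        intro i hi
        have hik := Finset.mem_range.mp hi
        have hsR : R (i + 1) ≤ s :=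
          le_of_lt (lt_of_le_of_lt (Ranti 1 (i + 1) le_rfl (by omega) (by omega)) hcase4)
        rw [hfM (i + 1) (by omega) (by omega) s hsR, Nat.add_sub_cancel, sub_self]
      rw [Finset.sum_eq_zero hterm]
      ring
    · -- middle: locate the region
      have tot : ∀ n j, j + n = k → 1 ≤ j → s ≤ R j →
          ∃ p, 1 ≤ p ∧ p ≤ k ∧
            ((L p < s ∧ s ≤ R p) ∨ (p + 1 ≤ k ∧ R (p + 1) < s ∧ s ≤ L p)) := by
        intro n
        induction n with
        | zero =>
            intro j hjk h1 hsR
            have hjk' : j = k := by omega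
            subst hjk'
            exact ⟨j, h1, le_rfl, Or.inl ⟨hcase1, hsR⟩⟩
        | succ n ih =>
            intro j hjk h1 hsR
            rcases lt_or_ge (L j) s with hL' | hL'
            · exact ⟨j, h1, by omega, Or.inl ⟨hL', hsR⟩⟩
            · rcases lt_or_ge (R (j + 1)) s with hR' | hR'
              · exact ⟨j, h1, by omega, Or.inr ⟨by omega, hR', hL'⟩⟩
              · exact ih (j + 1) (by omega) (by omega) hR'
      obtain ⟨p, hp1, hpk, hreg⟩ := tot (k - 1) 1 (by omega) le_rfl hcase41
      rcases hreg with ⟨hl, hr⟩ | ⟨hpk1, hl, hr⟩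
      · -- rarefaction region p
        have hval : u x t = (t / x - 1) / 2 + m p := by
          apply hu2 p hp1 hpk x t ht
          · have hLp : L p = 1 / (1 + 2 * ((if p < k then M p else u_l) - m p)) := by
              rw [hL, hU]
            rw [← hsx, ← hLp]; exact hl
          · have hRp : R p = 1 / (1 + 2 * (M (p - 1) - m p)) := by rw [hR]
            rw [← hsx, ← hRp]; exact hr
        have hsp : 0 < s := lt_trans (hLpos p hp1 hpk) hl
        have hxt : t / x = 1 / s := by rw [hsx, one_div_div]
        rw [hval, hV]
        have hterm : ∀ i < k, h (i + 1) s - M i =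
            (if i + 1 < p then M (i + 1) else w p s) - (if i < p then M i else w p s) := by
          intro i hik
          rcases lt_trichotomy (i + 1) p with hip | hip | hip
          · have hsL : s ≤ L (i + 1) :=
              le_trans hr (le_of_lt (hRLlt (i + 1) p (by omega) hip hpk))
            rw [hfU (i + 1) s hsL, hU, if_pos (show i + 1 < k by omega),
              if_pos hip, if_pos (show i < p by omega)]
          · subst hip
            rw [hfw (i + 1) hp1 hpk s hl hr, if_neg (lt_irrefl (i + 1)),
              if_pos (Nat.lt_succ_self i)]
          · have hsR : R (i + 1) ≤ s := by
              have h2 : R (i + 1) ≤ R (p + 1) := Ranti (p + 1) (i + 1) (by omega) (by omega) (by omega)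
              have h3 : R (p + 1) < L p := hRL p hp1 (by omega)
              exact le_of_lt (lt_of_le_of_lt (lt_of_le_of_lt h2 h3).le hl)
            rw [hfM (i + 1) (by omega) (by omega) s hsR, Nat.add_sub_cancel,
              if_neg (show ¬ i + 1 < p by omega), if_neg (show ¬ i < p by omega),
              sub_self, sub_self]
        have htel : ∑ i ∈ Finset.range k, (h (i + 1) s - M i) =
            (if k < p then M k else w p s) - (if 0 < p then M 0 else w p s) :=
          fan_telescope k _ (fun i => if i < p then M i else w p s) hterm
        rw [htel, if_neg (show ¬ k < p by omega), if_pos (show 0 < p by omega), hM0,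
          hw, hxt]
        ring
      · -- plateau region p
        have hval : u x t = M p := by
          apply hu3 p hp1 (by omega) x t ht
          · have hRp : R (p + 1) = 1 / (1 + 2 * (M p - m (p + 1))) := by
              rw [hR, Nat.add_sub_cancel]
            rw [← hsx, ← hRp]; exact hl
          · have hLp : L p = 1 / (1 + 2 * (M p - m p)) := by
              rw [hL, hU, if_pos (show p < k by omega)]
            rw [← hsx, ← hLp]; exact hr
        rw [hval, hV]
        have hterm : ∀ i < k, h (i + 1) s - M i = M (min (i + 1) p) - M (min i p) := by
          intro i hik
          rcases lt_or_ge i p with hip | hip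
          · have hsL : s ≤ L (i + 1) :=
              le_trans hr (Lanti (i + 1) p (by omega) (by omega) hpk)
            rw [hfU (i + 1) s hsL, hU, if_pos (show i + 1 < k by omega),
              min_eq_left (show i + 1 ≤ p by omega), min_eq_left (le_of_lt hip)]
          · have hsR : R (i + 1) ≤ s := by
              have h2 : R (i + 1) ≤ R (p + 1) := Ranti (p + 1) (i + 1) (by omega) (by omega) (by omega)
              exact le_of_lt (lt_of_le_of_lt h2 hl)
            rw [hfM (i + 1) (by omega) (by omega) s hsR, Nat.add_sub_cancel,
              min_eq_right (show p ≤ i + 1 by omega), min_eq_right hip,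
              sub_self, sub_self]
        have htel : ∑ i ∈ Finset.range k, (h (i + 1) s - M i) =
            M (min k p) - M (min 0 p) :=
          fan_telescope k _ (fun i => M (min i p)) hterm
        rw [htel, min_eq_right hpk, Nat.zero_min, hM0]
        ring
  -- assemble the five conclusions
  have hanti : Antitone (fun x : ℝ => u x t) := by
    intro x y hxy
    simp only []
    rw [main x, main y]
    exact Vanti (x / t) (y / t) (by gcongr)
  have hbounds : ∀ x : ℝ, u x t ∈ Set.Icc u_r u_l := by
    intro x
    rw [main x]
    exact ⟨Vlb _, Vub _⟩
  have hbot : ∀ x : ℝ, x ≤ t * L k → u x t = u_l := by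
    intro x hx
    apply hu1 x t ht
    have hLk : L k = 1 / (1 + 2 * (u_l - m k)) := by
      rw [hL, hU, if_neg (lt_irrefl k)]
    rw [← hLk]
    rw [div_le_iff₀ ht]
    linarith [mul_comm (L k) t]
  have htop : ∀ x : ℝ, t * R 1 + 1 ≤ x → u x t = u_r := by
    intro x hx
    apply hu4 x t ht
    have hR1 : R 1 = 1 / (1 + 2 * (u_r - m 1)) := by
      rw [hR]; norm_num [hM0]
    rw [← hR1, lt_div_iff₀ ht]
    linarith [mul_comm (R 1) t]
  refine ⟨hanti, hbounds, ?_, ?_, ?_, ?_⟩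
  · have hev : ∀ᶠ x in Filter.atBot, (fun _ : ℝ => u_l) x = u x t :=
      Filter.eventually_atBot.mpr ⟨t * L k, fun x hx => (hbot x hx).symm⟩
    exact Filter.Tendsto.congr' hev tendsto_const_nhds
  · have hev : ∀ᶠ x in Filter.atTop, (fun _ : ℝ => u_r) x = u x t :=
      Filter.eventually_atTop.mpr ⟨t * R 1 + 1, fun x hx => (htop x hx).symm⟩
    exact Filter.Tendsto.congr' hev tendsto_const_nhds
  · exact fan_evar_antitone (fun x y hxy => hanti hxy)
      (fun x => ⟨(hbounds x).1, (hbounds x).2⟩)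
      (hbot (t * L k) le_rfl) (htop (t * R 1 + 1) le_rfl)
  · refine fan_evar_antitone (c := u_l) (d := u_r) (a := (-1 : ℝ)) (b := (0 : ℝ))
      ?_ ?_ ?_ ?_
    · intro x y hxy
      by_cases hy : y < 0
      · rw [if_pos hy, if_pos (lt_of_le_of_lt hxy hy)]
      · rw [if_neg hy]
        by_cases hx : x < 0
        · rw [if_pos hx]; exact le_of_lt hrl
        · rw [if_neg hx]
    · intro x
      by_cases hx : x < 0
      · rw [if_pos hx]; exact ⟨le_of_lt hrl, le_rfl⟩
      · rw [if_neg hx]; exact ⟨le_rfl, le_of_lt hrl⟩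
    · norm_num
    · norm_num
end

section
/- Let a > 0 and let T_a := {(ρ_1, ρ_2) ∈ ℝ² : −a ≤ ρ_1 < ρ_2 ≤ a} (the Preisach triangle). Let u : [0,T] → ℝ be nondecreasing and let z_0 : T_a → {−1, +1} be measurable with z_0(ρ) = +1 whenever ρ_2 < u(0) (compatibility of the initial configuration with u(0)). For each t ∈ [0,T] define the configuration z_t : T_a → {−1,+1} by z_t(ρ) = +1 if ρ_2 < u(t) and z_t(ρ) = z_0(ρ) otherwise (this is the family of Relay outputs under the nondecreasing input u). Equip the configurations with the metric d(z, z') = ∫_{T_a} |z(ρ) − z'(ρ)| dρ. Then the total variation of the path t ↦ z_t on [0,T] with respect to d equals d(z_T, z_0). -/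
open MeasureTheory

/-- The Preisach triangle `T_a = {(ρ₁, ρ₂) : -a ≤ ρ₁ < ρ₂ ≤ a}`. -/
def preisachTriangle (a : ℝ) : Set (ℝ × ℝ) :=
  {ρ | -a ≤ ρ.1 ∧ ρ.1 < ρ.2 ∧ ρ.2 ≤ a}

/-- The family of Relay outputs generated by a nondecreasing input `u` from the initial
configuration `z₀`: at time `t`, the Relay of thresholds `ρ` is `+1` if `ρ₂ < u(t)`, and
keeps its initial state otherwise. -/
noncomputable def relayConfig (u : ℝ → ℝ) (z₀ : ℝ × ℝ → ℝ) (t : ℝ) (ρ : ℝ × ℝ) : ℝ :=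
  if ρ.2 < u t then 1 else z₀ ρ

/-- The `L¹` distance between two Preisach configurations on the triangle `T_a`. -/
noncomputable def configDist (a : ℝ) (z z' : ℝ × ℝ → ℝ) : ℝ :=
  ∫ ρ in preisachTriangle a, |z ρ - z' ρ|

lemma preisachTriangle_finite (a : ℝ) : MeasureTheory.volume (preisachTriangle a) ≠ ⊤ := by
  have hsub : preisachTriangle a ⊆ Set.Icc (-a, -a) (a, a) := by
    rintro ⟨x, y⟩ ⟨h1, h2, h3⟩
    constructor <;> constructor <;> dsimp <;> linarith
  exact ne_top_of_le_ne_top (IsCompact.measure_lt_top isCompact_Icc).ne (measure_mono hsub)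

lemma relayConfig_measurable (u : ℝ → ℝ) (z₀ : ℝ × ℝ → ℝ) (hz₀m : Measurable z₀) (t : ℝ) :
    Measurable (relayConfig u z₀ t) := by
  apply Measurable.ite _ measurable_const hz₀m
  exact measurableSet_lt measurable_snd measurable_const

lemma relay_integrableOn (a : ℝ) (u : ℝ → ℝ) (z₀ : ℝ × ℝ → ℝ) (hz₀m : Measurable z₀)
    (hz₀v : ∀ ρ ∈ preisachTriangle a, z₀ ρ = 1 ∨ z₀ ρ = -1) (s t : ℝ) :
    IntegrableOn (fun ρ => |relayConfig u z₀ t ρ - relayConfig u z₀ s ρ|)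
      (preisachTriangle a) := by
  apply Measure.integrableOn_of_bounded (M := 2) (preisachTriangle_finite a)
  · exact (((relayConfig_measurable u z₀ hz₀m t).sub
      (relayConfig_measurable u z₀ hz₀m s)).abs).aestronglyMeasurable
  · have hmeas : MeasurableSet (preisachTriangle a) := by
      apply MeasurableSet.inter
      · exact measurableSet_le measurable_const measurable_fst
      apply MeasurableSet.inter
      · exact measurableSet_lt measurable_fst measurable_snd
      · exact measurableSet_le measurable_snd measurable_const
    rw [ae_restrict_iff' hmeas]
    filter_upwards with ρ hρ
    have h1 : relayConfig u z₀ t ρ = 1 ∨ relayConfig u z₀ t ρ = -1 := by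
      unfold relayConfig; split_ifs; exacts [Or.inl rfl, hz₀v ρ hρ]
    have h2 : relayConfig u z₀ s ρ = 1 ∨ relayConfig u z₀ s ρ = -1 := by
      unfold relayConfig; split_ifs; exacts [Or.inl rfl, hz₀v ρ hρ]
    rw [Real.norm_eq_abs, abs_abs]
    rcases h1 with h1 | h1 <;> rcases h2 with h2 | h2 <;> rw [h1, h2] <;> norm_num

lemma configDist_add (a : ℝ) (u : ℝ → ℝ) (z₀ : ℝ × ℝ → ℝ) (hz₀m : Measurable z₀)
    (hz₀v : ∀ ρ ∈ preisachTriangle a, z₀ ρ = 1 ∨ z₀ ρ = -1)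
    {s r t : ℝ} (hsr : u s ≤ u r) (hrt : u r ≤ u t) :
    configDist a (relayConfig u z₀ t) (relayConfig u z₀ s)
      = configDist a (relayConfig u z₀ t) (relayConfig u z₀ r)
        + configDist a (relayConfig u z₀ r) (relayConfig u z₀ s) := by
  unfold configDist
  rw [← integral_add (relay_integrableOn a u z₀ hz₀m hz₀v r t)
      (relay_integrableOn a u z₀ hz₀m hz₀v s r)]
  apply integral_congr_ae
  filter_upwards with ρ
  unfold relayConfig
  split_ifs with h1 h2 h3 h3 h2 h3 h3 <;> simp <;> linarith

/-- For a nondecreasing input `u` on `[0,T]` and a compatible initial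
configuration `z₀`, the total variation of the path `t ↦ z_t` of Relay configurations,
with respect to the metric `d(z,z') = ∫_{T_a} |z - z'| dρ`, equals `d(z_T, z_0)`:
`d(z_T, z_0)` is the greatest among all partition sums
`∑_j d(z_{t_j}, z_{t_{j-1}})` over partitions `0 = t_0 < t_1 < … < t_M = T`. -/
theorem monotone_evolution_variation (a T : ℝ) (ha : 0 < a) (hT : 0 < T)
    (u : ℝ → ℝ) (hu : MonotoneOn u (Set.Icc 0 T))
    (z₀ : ℝ × ℝ → ℝ) (hz₀m : Measurable z₀)
    (hz₀v : ∀ ρ ∈ preisachTriangle a, z₀ ρ = 1 ∨ z₀ ρ = -1)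
    (hcomp : ∀ ρ ∈ preisachTriangle a, ρ.2 < u 0 → z₀ ρ = 1) :
    IsGreatest
      { S : ℝ | ∃ (M : ℕ) (τ : ℕ → ℝ), 1 ≤ M ∧ τ 0 = 0 ∧ τ M = T ∧
          (∀ j, j < M → τ j < τ (j + 1)) ∧
          S = ∑ j ∈ Finset.range M,
            configDist a (relayConfig u z₀ (τ (j + 1))) (relayConfig u z₀ (τ j)) }
      (configDist a (relayConfig u z₀ T) (relayConfig u z₀ 0)) := by
  constructor
  · refine ⟨1, fun j => if j = 0 then 0 else T, le_refl 1, by simp, by simp, ?_, by simp⟩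
    intro j hj
    interval_cases j
    simpa using hT
  · rintro S ⟨M, τ, hM, hτ0, hτM, hmono, rfl⟩
    -- τ is monotone on {0,...,M}
    have hmono' : ∀ i j, i ≤ j → j ≤ M → τ i ≤ τ j := by
      intro i j hij hjM
      induction j with
      | zero => simp at hij; simp [hij]
      | succ k ih =>
        rcases Nat.lt_or_ge i (k + 1) with h | h
        · exact le_trans (ih (Nat.lt_succ_iff.mp h) (le_of_lt hjM))
            (le_of_lt (hmono k hjM))
        · have : i = k + 1 := le_antisymm hij h
          simp [this]
    have hmem : ∀ j, j ≤ M → τ j ∈ Set.Icc 0 T := by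
      intro j hj
      constructor
      · rw [← hτ0]; exact hmono' 0 j (Nat.zero_le j) hj
      · rw [← hτM]; exact hmono' j M hj le_rfl
    have key : ∀ N, N ≤ M →
        ∑ j ∈ Finset.range N,
          configDist a (relayConfig u z₀ (τ (j + 1))) (relayConfig u z₀ (τ j))
        = configDist a (relayConfig u z₀ (τ N)) (relayConfig u z₀ (τ 0)) := by
      intro N hN
      induction N with
      | zero =>
        simp [configDist]
      | succ k ih =>
        rw [Finset.sum_range_succ, ih (le_of_lt hN)]
        rw [configDist_add a u z₀ hz₀m hz₀v
          (hu (hmem 0 (Nat.zero_le M)) (hmem k (le_of_lt hN))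
            (hmono' 0 k (Nat.zero_le k) (le_of_lt hN)))
          (hu (hmem k (le_of_lt hN)) (hmem (k + 1) hN)
            (le_of_lt (hmono k hN)))]
        ring
    rw [key M le_rfl, hτ0, hτM]
end

section
/- Let a > 0, let T_a := {(ρ_1, ρ_2) ∈ ℝ² : −a ≤ ρ_1 < ρ_2 ≤ a} (the Preisach triangle), and let −a ≤ u_r < u_l ≤ a. Let z_r, z_l : T_a → {−1, +1} be measurable configurations compatible with u_r and u_l respectively, i.e.: z_r(ρ) = +1 whenever ρ_2 ≤ u_r and z_r(ρ) = −1 whenever ρ_1 ≥ u_r; z_l(ρ) = +1 whenever ρ_2 ≤ u_l and z_l(ρ) = −1 whenever ρ_1 ≥ u_l. Define z* : T_a → {−1,+1} by z*(ρ) = +1 if ρ_2 ≤ u_l and z*(ρ) = z_r(ρ) otherwise (the configuration obtained from z_r by a monotone increase of the input from u_r to u_l). Then, with d(z, z') = ∫_{T_a} |z(ρ) − z'(ρ)| dρ, one has d(z_l, z*) + d(z*, z_r) = d(z_l, z_r). -/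
open MeasureTheory

/-- The configuration obtained from `z_r` by a monotone increase of the input up to `u_l`:
all Relays with upper threshold `ρ₂ ≤ u_l` are switched to `+1`, the others keep their
state. -/
noncomputable def monotoneUpdate (u_l : ℝ) (z_r : ℝ × ℝ → ℝ) (ρ : ℝ × ℝ) : ℝ :=
  if ρ.2 ≤ u_l then 1 else z_r ρ

lemma preisachTriangle_measurableSet (a : ℝ) : MeasurableSet (preisachTriangle a) := by
  have : preisachTriangle a =
      {ρ : ℝ × ℝ | -a ≤ ρ.1} ∩ ({ρ : ℝ × ℝ | ρ.1 < ρ.2} ∩ {ρ : ℝ × ℝ | ρ.2 ≤ a}) := by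
    ext ρ; simp [preisachTriangle, Set.mem_setOf_eq, and_assoc]
  rw [this]
  exact (measurableSet_le measurable_const measurable_fst).inter
    ((measurableSet_lt measurable_fst measurable_snd).inter
      (measurableSet_le measurable_snd measurable_const))

lemma preisachTriangle_volume_lt_top (a : ℝ) :
    volume (preisachTriangle a) < ⊤ := by
  have hsub : preisachTriangle a ⊆ Set.Icc (-a, -a) (a, a) := by
    rintro ρ ⟨h1, h2, h3⟩
    constructor
    · exact ⟨h1, le_trans h1 (le_of_lt h2)⟩
    · exact ⟨le_trans (le_of_lt h2) h3, h3⟩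
  exact lt_of_le_of_lt (measure_mono hsub) isCompact_Icc.measure_lt_top

/-- Let `-a ≤ u_r < u_l ≤ a` and let `z_r`, `z_l` be configurations on the
Preisach triangle compatible with `u_r` and `u_l` respectively.  Let `z*` be the
configuration obtained from `z_r` by a monotone increase of the input from `u_r` to `u_l`.
Then `d(z_l, z*) + d(z*, z_r) = d(z_l, z_r)` for the metric `d(z,z') = ∫_{T_a} |z - z'|`. -/
theorem intermediate_config_additivity (a u_r u_l : ℝ) (ha : 0 < a)
    (hra : -a ≤ u_r) (hrl : u_r < u_l) (hla : u_l ≤ a)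
    (z_r z_l : ℝ × ℝ → ℝ) (hzrm : Measurable z_r) (hzlm : Measurable z_l)
    (hzrv : ∀ ρ ∈ preisachTriangle a, z_r ρ = 1 ∨ z_r ρ = -1)
    (hzlv : ∀ ρ ∈ preisachTriangle a, z_l ρ = 1 ∨ z_l ρ = -1)
    (hzr1 : ∀ ρ ∈ preisachTriangle a, ρ.2 ≤ u_r → z_r ρ = 1)
    (hzr2 : ∀ ρ ∈ preisachTriangle a, u_r ≤ ρ.1 → z_r ρ = -1)
    (hzl1 : ∀ ρ ∈ preisachTriangle a, ρ.2 ≤ u_l → z_l ρ = 1)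
    (hzl2 : ∀ ρ ∈ preisachTriangle a, u_l ≤ ρ.1 → z_l ρ = -1) :
    configDist a z_l (monotoneUpdate u_l z_r)
      + configDist a (monotoneUpdate u_l z_r) z_r
      = configDist a z_l z_r := by
  set T := preisachTriangle a with hT
  have hTmeas := preisachTriangle_measurableSet a
  have hTvol := preisachTriangle_volume_lt_top a
  have hzsm : Measurable (monotoneUpdate u_l z_r) := by
    unfold monotoneUpdate
    exact Measurable.ite (measurableSet_le measurable_snd measurable_const)
      measurable_const hzrm
  -- integrability of each integrand
  have hbound : ∀ (f g : ℝ × ℝ → ℝ), Measurable f → Measurable g →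
      (∀ ρ ∈ T, |f ρ - g ρ| ≤ 2) →
      IntegrableOn (fun ρ => |f ρ - g ρ|) T := by
    intro f g hf hg hb
    apply Measure.integrableOn_of_bounded hTvol.ne
      ((hf.sub hg).abs.aestronglyMeasurable)
    filter_upwards [ae_restrict_mem hTmeas] with ρ hρ
    simpa [Real.norm_eq_abs, abs_abs] using hb ρ hρ
  have habs : ∀ ρ ∈ T, |z_l ρ| = 1 := by
    intro ρ hρ; rcases hzlv ρ hρ with h | h <;> simp [h]
  have habr : ∀ ρ ∈ T, |z_r ρ| = 1 := by
    intro ρ hρ; rcases hzrv ρ hρ with h | h <;> simp [h]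
  have habm : ∀ ρ ∈ T, |monotoneUpdate u_l z_r ρ| = 1 := by
    intro ρ hρ; unfold monotoneUpdate
    split
    · simp
    · exact habr ρ hρ
  have hb1 : ∀ ρ ∈ T, |z_l ρ - monotoneUpdate u_l z_r ρ| ≤ 2 := by
    intro ρ hρ
    calc |z_l ρ - monotoneUpdate u_l z_r ρ| ≤ |z_l ρ| + |monotoneUpdate u_l z_r ρ| :=
          abs_sub _ _
      _ = 2 := by rw [habs ρ hρ, habm ρ hρ]; norm_num
  have hb2 : ∀ ρ ∈ T, |monotoneUpdate u_l z_r ρ - z_r ρ| ≤ 2 := by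
    intro ρ hρ
    calc |monotoneUpdate u_l z_r ρ - z_r ρ| ≤ |monotoneUpdate u_l z_r ρ| + |z_r ρ| :=
          abs_sub _ _
      _ = 2 := by rw [habm ρ hρ, habr ρ hρ]; norm_num
  have hi1 := hbound z_l (monotoneUpdate u_l z_r) hzlm hzsm hb1
  have hi2 := hbound (monotoneUpdate u_l z_r) z_r hzsm hzrm hb2
  -- pointwise identity on the triangle
  have hpoint : ∀ ρ ∈ T,
      |z_l ρ - monotoneUpdate u_l z_r ρ| + |monotoneUpdate u_l z_r ρ - z_r ρ|
        = |z_l ρ - z_r ρ| := by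
    intro ρ hρ
    unfold monotoneUpdate
    by_cases h : ρ.2 ≤ u_l
    · simp only [if_pos h]
      rw [hzl1 ρ hρ h]
      simp
    · simp only [if_neg h]
      simp
  unfold configDist
  rw [← integral_add hi1 hi2]
  exact setIntegral_congr_fun hTmeas hpoint
end
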